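/- Let n ≥ 3 be an integer, m = n − 1, ρ < 1/(2m), and let (x, y) be a solution of the system (S_ρ) on ℝ such that for all t ∈ ℝ: 0 < x(t) < 1, x′(t) < 0, y(t) > 0, y′(t) > 0, and (x(t), y(t)) → (1, 0) as t → −∞. Then x(t) → 0 and y(t) → +∞ as t → +∞. -/

import Mathlib

/-- `IsEinsteinSystemSol m ρ x y` means the pair of differentiable functions `(x, y)` solves
the planar system `(S_ρ)`:
`(1 − 2mρ)·x′ = (m−1)(1−mρ)(1 − x²) − x·y` and
`(1 − 2mρ)·y′ = −m(m−1)(1−(m+1)ρ)(1 − x²) + (1 + m − 4mρ)·x·y`,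
arising from rotationally symmetric gradient steady ρ-Einstein solitons. -/
def IsEinsteinSystemSol (m ρ : ℝ) (x y : ℝ → ℝ) : Prop :=
  Differentiable ℝ x ∧ Differentiable ℝ y ∧
    (∀ t : ℝ, (1 - 2 * m * ρ) * deriv x t =
      (m - 1) * (1 - m * ρ) * (1 - x t ^ 2) - x t * y t) ∧
    (∀ t : ℝ, (1 - 2 * m * ρ) * deriv y t =
      -(m * (m - 1) * (1 - (m + 1) * ρ) * (1 - x t ^ 2)) + (1 + m - 4 * m * ρ) * x t * y t)

/-!
Both coordinates are monotone, so `x` decreases to some `L ∈ [0, 1)` and `y` increases to a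
limit `M ≤ +∞`. If `M` were finite, both derivatives would converge, hence to `0`, so `(L, M)`
would be an equilibrium of `(S_ρ)`; but every equilibrium has `L² = 1`. Thus `y → +∞`, and if
`L > 0` the term `-x y` would drive `x′` to `-∞`, hence `x` to `-∞`, against `x > 0`.
-/

open Filter Set Topology

lemma eq_zero_of_tendsto_of_tendsto_deriv {f : ℝ → ℝ} (hf : Differentiable ℝ f) {a c : ℝ}
    (hfa : Tendsto f atTop (𝓝 a)) (hf'c : Tendsto (deriv f) atTop (𝓝 c)) : c = 0 := by
  have slope : ∀ t : ℝ, ∃ ξ, t < ξ ∧ deriv f ξ = f (t + 1) - f t := by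
    intro t
    obtain ⟨ξ, hξ, hd⟩ := exists_hasDerivAt_eq_slope f (deriv f) (lt_add_one t)
      hf.continuous.continuousOn (fun s _ => (hf s).hasDerivAt)
    exact ⟨ξ, hξ.1, by rw [hd, add_sub_cancel_left, div_one]⟩
  choose ξ hξt hξ using slope
  have hξ_top : Tendsto ξ atTop atTop := tendsto_atTop_mono (fun t => (hξt t).le) tendsto_id
  have hdiff : Tendsto (fun t => f (t + 1) - f t) atTop (𝓝 0) := by
    simpa using (hfa.comp (tendsto_atTop_add_const_right _ 1 tendsto_id)).sub hfa
  exact tendsto_nhds_unique (hf'c.comp hξ_top) (hdiff.congr fun t => (hξ t).symm)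

lemma tendsto_atBot_of_tendsto_deriv_atBot {f : ℝ → ℝ} (hf : Differentiable ℝ f)
    (hf' : Tendsto (deriv f) atTop atBot) : Tendsto f atTop atBot := by
  obtain ⟨T, hT⟩ := (hf'.eventually_le_atBot (-1)).exists_forall_of_atTop
  have linear_bound : ∀ t ≥ T, f t ≤ f T - (t - T) := fun t ht => by
    have := (convex_Ici T).image_sub_le_mul_sub_of_deriv_le hf.continuous.continuousOn
      hf.differentiableOn (fun s hs => hT s (interior_subset hs)) T self_mem_Ici t ht ht
    linarith
  refine tendsto_atBot_mono' atTop (eventually_ge_atTop T |>.mono linear_bound) ?_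
  exact tendsto_atBot_add_const_left _ _ <| tendsto_neg_atTop_atBot.comp <|
    tendsto_atTop_add_const_right _ _ tendsto_id

section EinsteinField

variable (m ρ : ℝ)

def einsteinFieldX (x y : ℝ) : ℝ :=
  (m - 1) * (1 - m * ρ) * (1 - x ^ 2) - x * y

def einsteinFieldY (x y : ℝ) : ℝ :=
  -(m * (m - 1) * (1 - (m + 1) * ρ) * (1 - x ^ 2)) + (1 + m - 4 * m * ρ) * x * y

variable {m ρ}

lemma sq_eq_one_of_einsteinField_eq_zero (hm : m ≠ 1) (hρ : 1 - 2 * m * ρ ≠ 0) {x y : ℝ}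
    (hX : einsteinFieldX m ρ x y = 0) (hY : einsteinFieldY m ρ x y = 0) : x ^ 2 = 1 := by
  -- eliminating `x * y` leaves `(1 - x²)` times `(m - 1)(1 - 2mρ)²`
  have key : (1 - x ^ 2) * ((m - 1) * (1 - 2 * m * ρ) ^ 2) = 0 := by
    unfold einsteinFieldX at hX
    unfold einsteinFieldY at hY
    linear_combination hY + (1 + m - 4 * m * ρ) * hX
  have hfactor : (m - 1) * (1 - 2 * m * ρ) ^ 2 ≠ 0 :=
    mul_ne_zero (sub_ne_zero.mpr hm) (pow_ne_zero 2 hρ)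
  linear_combination -(mul_eq_zero.mp key).resolve_right hfactor

lemma continuous_einsteinFieldX : Continuous (einsteinFieldX m ρ).uncurry := by
  unfold einsteinFieldX; fun_prop

lemma continuous_einsteinFieldY : Continuous (einsteinFieldY m ρ).uncurry := by
  unfold einsteinFieldY; fun_prop

end EinsteinField

namespace IsEinsteinSystemSol

variable {m ρ : ℝ} {x y : ℝ → ℝ}

lemma deriv_fst_eq (hsol : IsEinsteinSystemSol m ρ x y) (hρ : 1 - 2 * m * ρ ≠ 0) (t : ℝ) :
    deriv x t = einsteinFieldX m ρ (x t) (y t) / (1 - 2 * m * ρ) := by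
  rw [eq_div_iff hρ, mul_comm]; exact hsol.2.2.1 t

lemma deriv_snd_eq (hsol : IsEinsteinSystemSol m ρ x y) (hρ : 1 - 2 * m * ρ ≠ 0) (t : ℝ) :
    deriv y t = einsteinFieldY m ρ (x t) (y t) / (1 - 2 * m * ρ) := by
  rw [eq_div_iff hρ, mul_comm]; exact hsol.2.2.2 t

lemma sq_eq_one_of_tendsto (hsol : IsEinsteinSystemSol m ρ x y) (hm : m ≠ 1)
    (hρ : 1 - 2 * m * ρ ≠ 0) {L M : ℝ} (hxL : Tendsto x atTop (𝓝 L))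
    (hyM : Tendsto y atTop (𝓝 M)) : L ^ 2 = 1 := by
  have hxy : Tendsto (fun t => (x t, y t)) atTop (𝓝 (L, M)) := hxL.prodMk_nhds hyM
  have hX := eq_zero_of_tendsto_of_tendsto_deriv hsol.1 hxL <|
    (((continuous_einsteinFieldX.tendsto _).comp hxy).div_const (1 - 2 * m * ρ)).congr
      fun t => (hsol.deriv_fst_eq hρ t).symm
  have hY := eq_zero_of_tendsto_of_tendsto_deriv hsol.2.1 hyM <|
    (((continuous_einsteinFieldY.tendsto _).comp hxy).div_const (1 - 2 * m * ρ)).congr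
      fun t => (hsol.deriv_snd_eq hρ t).symm
  exact sq_eq_one_of_einsteinField_eq_zero hm hρ
    ((div_eq_zero_iff.mp hX).resolve_right hρ) ((div_eq_zero_iff.mp hY).resolve_right hρ)

lemma tendsto_snd_atTop (hsol : IsEinsteinSystemSol m ρ x y) (hm : m ≠ 1)
    (hρ : 1 - 2 * m * ρ ≠ 0) {L : ℝ} (hxL : Tendsto x atTop (𝓝 L)) (hL : L ^ 2 ≠ 1)
    (hy : Monotone y) : Tendsto y atTop atTop := by
  by_contra hy_top
  have hy_bdd : BddAbove (range y) :=
    not_not.mp fun h => hy_top (tendsto_atTop_atTop_of_monotone' hy h)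
  exact hL (hsol.sq_eq_one_of_tendsto hm hρ hxL (tendsto_atTop_ciSup hy hy_bdd))

lemma limit_fst_eq_zero (hsol : IsEinsteinSystemSol m ρ x y) (hρ : 0 < 1 - 2 * m * ρ)
    {L : ℝ} (hL : 0 ≤ L) (hxL : Tendsto x atTop (𝓝 L)) (hy : Tendsto y atTop atTop) :
    L = 0 := by
  by_contra hL0
  have hxy : Tendsto (fun t => x t * y t) atTop atTop :=
    hxL.pos_mul_atTop (lt_of_le_of_ne hL (Ne.symm hL0)) hy
  have hfield : Tendsto (fun t => einsteinFieldX m ρ (x t) (y t)) atTop atBot :=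
    (tendsto_const_nhds.mul (tendsto_const_nhds.sub (hxL.pow 2))).add_atBot
      (tendsto_neg_atTop_atBot.comp hxy) |>.congr fun t => (sub_eq_add_neg _ _).symm
  have hx' : Tendsto (deriv x) atTop atBot :=
    (hfield.atBot_div_const hρ).congr fun t => (hsol.deriv_fst_eq hρ.ne' t).symm
  exact not_tendsto_nhds_of_tendsto_atBot (tendsto_atBot_of_tendsto_deriv_atBot hsol.1 hx') L hxL

end IsEinsteinSystemSol

theorem soliton_trajectory_limits_general (n : ℕ) (hn : 3 ≤ n) (m ρ : ℝ)
    (hm : m = (n : ℝ) - 1) (hρ : ρ < 1 / (2 * m)) (x y : ℝ → ℝ)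
    (hsol : IsEinsteinSystemSol m ρ x y)
    (hx : ∀ t : ℝ, 0 < x t ∧ x t < 1) (hx' : ∀ t : ℝ, deriv x t < 0)
    (hy' : ∀ t : ℝ, 0 < deriv y t) :
    Filter.Tendsto x Filter.atTop (nhds 0) ∧
      Filter.Tendsto y Filter.atTop Filter.atTop := by
  have hm2 : (2 : ℝ) ≤ m := by
    rw [hm, le_sub_iff_add_le]; exact_mod_cast hn
  have hden : 0 < 1 - 2 * m * ρ := by
    rw [lt_div_iff₀ (by positivity)] at hρ; linarith
  have hx_bdd : BddBelow (range x) := ⟨0, by rintro _ ⟨t, rfl⟩; exact (hx t).1.le⟩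
  have hxL := tendsto_atTop_ciInf (strictAnti_of_deriv_neg hx').antitone hx_bdd
  have hL0 : 0 ≤ ⨅ t, x t := le_ciInf fun t => (hx t).1.le
  have hL1 : ⨅ t, x t < 1 := (ciInf_le hx_bdd 0).trans_lt (hx 0).2
  have hy_top := hsol.tendsto_snd_atTop (by linarith) hden.ne' hxL (by nlinarith)
    (strictMono_of_deriv_pos hy').monotone
  rw [← hsol.limit_fst_eq_zero hden hL0 hxL hy_top]
  exact ⟨hxL, hy_top⟩

/-- First step of Proposition 4.4: along the soliton trajectory (`ρ < 1/(2m)`),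
`x(t) → 0` and `y(t) → +∞` as `t → +∞`. -/
theorem soliton_trajectory_limits (n : ℕ) (hn : 3 ≤ n) (m ρ : ℝ)
    (hm : m = (n : ℝ) - 1) (hρ : ρ < 1 / (2 * m)) (x y : ℝ → ℝ)
    (hsol : IsEinsteinSystemSol m ρ x y)
    (hx : ∀ t : ℝ, 0 < x t ∧ x t < 1) (hx' : ∀ t : ℝ, deriv x t < 0)
    (hy : ∀ t : ℝ, 0 < y t) (hy' : ∀ t : ℝ, 0 < deriv y t)
    (hlim : Filter.Tendsto (fun t => (x t, y t)) Filter.atBot (nhds (1, 0))) :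
    Filter.Tendsto x Filter.atTop (nhds 0) ∧
      Filter.Tendsto y Filter.atTop Filter.atTop :=
  soliton_trajectory_limits_general n hn m ρ hm hρ x y hsol hx hx' hy'
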